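/- Let X be a set with distinct elements a, c, and define x ⊣ y = x if x ≠ c; c ⊣ y = a if y ≠ c; c ⊣ c = c. If (X, ⊢) is an interassociate of (X, ⊣), then either ⊢ = ⊣, or x ⊢ y = x for x ≠ c and c ⊢ y = a for all y. -/

import Mathlib

/-!
Taking `x = y` in `(x ⊣ y) ⊢ z = x ⊣ (y ⊢ z)` shows that `x ⊢ z = x` for `x ≠ c` and that
`c ⊢ z ∈ {a, c}`. Taking `y = z ≠ c`, `z' = a` in `(x ⊢ y) ⊣ z' = x ⊢ (y ⊣ z')` gives
`c ⊢ z = (c ⊢ z) ⊣ a ≠ c`, so `c ⊢ z = a`. Thus `⊢` is determined by the value of `c ⊢ c`,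
which is `c` (giving `⊣`) or `a` (giving the second operation).
-/

namespace LOB

variable {X : Type*} [DecidableEq X] (a c : X)

/-- The operation `⊣_c^a`. -/
def lob (p q : X) : X := if p ≠ c then p else if q ≠ c then a else c

variable {a c}

theorem lob_of_ne {p : X} (q : X) (hp : p ≠ c) : lob a c p q = p := if_pos hp

theorem lob_ne (hac : a ≠ c) (p : X) {q : X} (hq : q ≠ c) : lob a c p q ≠ c := by
  unfold lob
  split_ifs <;> assumption

variable {h : X → X → X}

theorem apply_of_ne (inter1 : ∀ x y z, h (lob a c x y) z = lob a c x (h y z))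
    {x : X} (z : X) (hx : x ≠ c) : h x z = x := by
  simpa only [lob_of_ne _ hx] using inter1 x x z

theorem apply_left_eq_or_eq (inter1 : ∀ x y z, h (lob a c x y) z = lob a c x (h y z))
    (z : X) : h c z = a ∨ h c z = c := by
  have key := inter1 c c z
  simp only [lob, ne_eq, not_true_eq_false, if_false] at key
  by_cases hcz : h c z = c
  · exact .inr hcz
  · exact .inl (by rwa [if_pos hcz] at key)

theorem apply_left_ne (hac : a ≠ c) (inter2 : ∀ x y z, lob a c (h x y) z = h x (lob a c y z))
    {z : X} (hz : z ≠ c) : h c z ≠ c := by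
  have key := inter2 c z a
  rw [lob_of_ne a hz] at key
  exact key ▸ lob_ne hac _ hac

theorem apply_eq (hac : a ≠ c) (inter1 : ∀ x y z, h (lob a c x y) z = lob a c x (h y z))
    (inter2 : ∀ x y z, lob a c (h x y) z = h x (lob a c y z)) (x y : X) :
    h x y = if x ≠ c then x else if y ≠ c then a else h c c := by
  split_ifs with hx hy
  · exact apply_of_ne inter1 y hx
  · rw [not_not.mp hx]
    exact (apply_left_eq_or_eq inter1 y).resolve_right (apply_left_ne hac inter2 hy)
  · rw [not_not.mp hx, not_not.mp hy]

end LOB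

open LOB in
theorem interassociate_of_LOB {X : Type*} [DecidableEq X] (a c : X) (hac : a ≠ c)
    (h : X → X → X)
    (inter1 : ∀ x y z : X,
      h ((fun p q => if p ≠ c then p else if q ≠ c then a else c) x y) z
        = (fun p q => if p ≠ c then p else if q ≠ c then a else c) x (h y z))
    (inter2 : ∀ x y z : X,
      (fun p q => if p ≠ c then p else if q ≠ c then a else c) (h x y) z
        = h x ((fun p q => if p ≠ c then p else if q ≠ c then a else c) y z)) :
    (∀ x y, h x y = if x ≠ c then x else if y ≠ c then a else c) ∨
    (∀ x y : X, h x y = if x ≠ c then x else a) := by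
  have shape := apply_eq (a := a) hac inter1 inter2
  rcases apply_left_eq_or_eq (a := a) inter1 c with hcc | hcc
  · refine .inr fun x y => ?_
    rw [shape, hcc, ite_self]
  · exact .inl fun x y => by rw [shape, hcc]
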